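/- arXiv:cs/0603097 — 5 statements merged into one kernel-verified Lean document; each statement's English description precedes it below -/
import Mathlib

section
/- For all u > 0, 2(u - 1 - log u)(1 + 2u) ≥ 3(u-1)^2. -/
/-!
Dividing by `2 (1 + 2u) > 0`, the claim is `log u ≤ (u - 1)(u + 5) / (2 (2u + 1))`, whose right
side is the [2/1] Padé approximant of `log` at `1`. The gap between the two sides vanishes at
`u = 1` and has derivative `(u - 1)³ / (u (2u + 1)²)`, of the sign of `u - 1`, so it is minimal
at `u = 1`.
-/

open Real Set

theorem IsMinOn.of_hasDerivAt_sign {f f' : ℝ → ℝ} {s : Set ℝ} {c : ℝ} (hs : Convex ℝ s)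
    (hc : c ∈ s) (hf : ∀ x ∈ s, HasDerivAt f (f' x) x) (hleft : ∀ x ∈ s, x < c → f' x ≤ 0)
    (hright : ∀ x ∈ s, c < x → 0 ≤ f' x) : IsMinOn f s c := by
  intro x hx
  have hderiv {a b : ℝ} (ha : a ∈ s) (hb : b ∈ s) : ∀ y ∈ Ioo a b, HasDerivAt f (f' y) y :=
    fun y hy => hf y (hs.ordConnected.out ha hb (Ioo_subset_Icc_self hy))
  have hcont {a b : ℝ} (ha : a ∈ s) (hb : b ∈ s) : ContinuousOn f (Icc a b) :=
    fun y hy => (hf y (hs.ordConnected.out ha hb hy)).continuousAt.continuousWithinAt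
  rcases lt_trichotomy x c with hxc | rfl | hcx
  · obtain ⟨y, hy, hslope⟩ := exists_hasDerivAt_eq_slope f f' hxc (hcont hx hc) (hderiv hx hc)
    have hsign := hleft y (hs.ordConnected.out hx hc (Ioo_subset_Icc_self hy)) hy.2
    rw [hslope, div_nonpos_iff] at hsign
    show f c ≤ f x
    rcases hsign with ⟨-, h⟩ | ⟨h, -⟩ <;> linarith
  · exact le_refl (f x)
  · obtain ⟨y, hy, hslope⟩ := exists_hasDerivAt_eq_slope f f' hcx (hcont hc hx) (hderiv hc hx)
    have hsign := hright y (hs.ordConnected.out hc hx (Ioo_subset_Icc_self hy)) hy.1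
    rw [hslope, div_nonneg_iff] at hsign
    show f c ≤ f x
    rcases hsign with ⟨h, -⟩ | ⟨-, h⟩ <;> linarith

theorem Real.hasDerivAt_padeApprox_sub_log {u : ℝ} (hu : 0 < u) :
    HasDerivAt (fun x => (x - 1) * (x + 5) / (2 * (2 * x + 1)) - log x)
      ((u - 1) ^ 3 / (u * (2 * u + 1) ^ 2)) u := by
  have h2u : 0 < 2 * u + 1 := by positivity
  refine ((((hasDerivAt_id' u).sub_const 1).fun_mul ((hasDerivAt_id' u).add_const 5)).fun_div
    ((((hasDerivAt_id' u).const_mul 2).add_const 1).const_mul 2) (by positivity)).fun_sub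
    (hasDerivAt_log hu.ne') |>.congr_deriv ?_
  field_simp
  ring

theorem Real.log_le_padeApprox {u : ℝ} (hu : 0 < u) :
    log u ≤ (u - 1) * (u + 5) / (2 * (2 * u + 1)) := by
  have hmin := IsMinOn.of_hasDerivAt_sign (convex_Ioi 0) (mem_Ioi.2 one_pos)
    (fun x hx => hasDerivAt_padeApprox_sub_log hx)
    (fun x hx hx1 => div_nonpos_of_nonpos_of_nonneg
      (Odd.pow_nonpos (by decide) (by linarith)) (by have := hx.out; positivity))
    (fun x hx hx1 => div_nonneg (pow_nonneg (by linarith) 3) (by have := hx.out; positivity))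
    (mem_Ioi.2 hu)
  simpa using hmin

theorem stmt_0 : ∀ u : ℝ, 0 < u →
    2 * (u - 1 - Real.log u) * (1 + 2 * u) ≥ 3 * (u - 1) ^ 2 := by
  intro u hu
  have hpos : 0 < 2 * (2 * u + 1) := by positivity
  have hlog := Real.log_le_padeApprox hu
  rw [le_div_iff₀ hpos] at hlog
  linarith
end

section
/- For all u > 0 with u ≠ 1, the function h(u) = 3(u-1)^2 / ((u - 1 - log u)(1 + 2u)) satisfies h(u) ≤ 2, and lim_{u→1} h(u) = 2, so sup_{u>0, u≠1} h(u) = 2. -/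
/-!
The bound `h u ≤ 2` is equivalent to `log u ≤ (u - 1) (u + 5) / (2 (2u + 1))`. The right side is
the `[2/1]` Padé approximant of `log` at `1`; the difference of the two sides vanishes at `u = 1`
and has derivative `4 (u - 1)³ / (u (4u + 2)²)`, which changes sign from `-` to `+` there, so it is
minimal at `1`. The limit comes from L'Hôpital's rule for `(u - 1)² / (u - 1 - log u)`, and then
`2` is approached by values of `h`, hence is the least upper bound.
-/

open Real Filter Set Topology

noncomputable def logPade (u : ℝ) : ℝ := (u - 1) * (u + 5) / (2 * (2 * u + 1))

lemma hasDerivAt_logPade_sub_log {u : ℝ} (hu : 0 < u) :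
    HasDerivAt (fun x => logPade x - log x) (4 * (u - 1) ^ 3 / (u * (4 * u + 2) ^ 2)) u := by
  have hnum : HasDerivAt (fun x : ℝ => (x - 1) * (x + 5)) (2 * u + 4) u :=
    (((hasDerivAt_id' u).sub_const 1).fun_mul ((hasDerivAt_id' u).add_const 5)).congr_deriv
      (by ring)
  have hden : HasDerivAt (fun x : ℝ => 2 * (2 * x + 1)) 4 u :=
    ((((hasDerivAt_id' u).const_mul 2).add_const 1).const_mul 2).congr_deriv (by ring)
  refine ((hnum.div hden (by positivity)).sub (hasDerivAt_log hu.ne')).congr_deriv ?_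
  field_simp
  ring

lemma isMinOn_logPade_sub_log : IsMinOn (fun x => logPade x - log x) (Ioi 0) 1 := by
  have hderiv : ∀ x ∈ Ioi (0 : ℝ),
      deriv (fun x => logPade x - log x) x = 4 * (x - 1) ^ 3 / (x * (4 * x + 2) ^ 2) :=
    fun x hx => (hasDerivAt_logPade_sub_log hx).deriv
  have hdiff : DifferentiableOn ℝ (fun x => logPade x - log x) (Ioi 0) :=
    fun x hx => (hasDerivAt_logPade_sub_log hx).differentiableAt.differentiableWithinAt
  refine isMinOn_Ioi_of_deriv (hasDerivAt_logPade_sub_log one_pos).continuousAt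
    (hdiff.mono Ioo_subset_Ioi_self) (hdiff.mono (Ioi_subset_Ioi zero_le_one)) ?_ ?_
  · rintro x ⟨hx0, hx1⟩
    rw [hderiv x hx0]
    exact div_nonpos_of_nonpos_of_nonneg
      (by nlinarith [pow_pos (sub_pos.2 hx1) 3]) (by positivity)
  · intro x (hx1 : 1 < x)
    have hx0 : 0 < x := one_pos.trans hx1
    rw [hderiv x hx0]
    exact div_nonneg (by nlinarith [pow_pos (sub_pos.2 hx1) 3]) (by positivity)

lemma log_le_logPade {u : ℝ} (hu : 0 < u) : log u ≤ logPade u := by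
  have := isMinOn_logPade_sub_log (mem_Ioi.2 hu)
  norm_num [logPade] at this ⊢
  linarith

lemma sub_one_sub_log_pos {u : ℝ} (hu : 0 < u) (hne : u ≠ 1) : 0 < u - 1 - log u := by
  linarith [log_lt_sub_one_of_pos hu hne]

lemma sq_div_sub_one_sub_log_mul_le_two {u : ℝ} (hu : 0 < u) (hne : u ≠ 1) :
    3 * (u - 1) ^ 2 / ((u - 1 - log u) * (1 + 2 * u)) ≤ 2 := by
  have hgap := sub_one_sub_log_pos hu hne
  have hpade := log_le_logPade hu
  rw [logPade, le_div_iff₀ (by positivity)] at hpade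
  rw [div_le_iff₀ (by positivity)]
  nlinarith

lemma eventually_pos_ne_one : ∀ᶠ u in 𝓝[≠] (1 : ℝ), 0 < u ∧ u ≠ 1 :=
  (eventually_nhdsWithin_of_eventually_nhds (eventually_gt_nhds one_pos)).and
    self_mem_nhdsWithin

lemma tendsto_sq_div_sub_one_sub_log :
    Tendsto (fun u : ℝ => (u - 1) ^ 2 / (u - 1 - log u)) (𝓝[≠] 1) (𝓝 2) := by
  refine HasDerivAt.lhopital_zero_nhdsNE (f' := fun u => 2 * (u - 1)) (g' := fun u => 1 - u⁻¹)
    ?_ ?_ ?_ ?_ ?_ ?_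
  · exact Eventually.of_forall fun u => by
      simpa using ((hasDerivAt_id' u).sub_const 1).fun_pow 2
  · filter_upwards [eventually_pos_ne_one] with u hu
    exact ((hasDerivAt_id' u).sub_const 1).sub (hasDerivAt_log hu.1.ne')
  · filter_upwards [eventually_pos_ne_one] with u hu
    rw [sub_ne_zero, ne_comm, ne_eq, inv_eq_one]
    exact hu.2
  · exact tendsto_nhdsWithin_of_tendsto_nhds <|
      (by fun_prop : Continuous fun u : ℝ => (u - 1) ^ 2).tendsto' 1 0 (by norm_num)
  · have : ContinuousAt (fun u : ℝ => u - 1 - log u) 1 := by fun_prop (disch := norm_num)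
    simpa using tendsto_nhdsWithin_of_tendsto_nhds this.tendsto
  · have h2u : Tendsto (fun u : ℝ => 2 * u) (𝓝[≠] 1) (𝓝 2) :=
      tendsto_nhdsWithin_of_tendsto_nhds <| (continuous_const_mul 2).tendsto' 1 2 (by norm_num)
    refine h2u.congr' ?_
    filter_upwards [eventually_pos_ne_one] with u ⟨hu0, hu1⟩
    have : u - 1 ≠ 0 := sub_ne_zero.2 hu1
    field_simp

lemma tendsto_sq_div_sub_one_sub_log_mul :
    Tendsto (fun u : ℝ => 3 * (u - 1) ^ 2 / ((u - 1 - log u) * (1 + 2 * u))) (𝓝[≠] 1) (𝓝 2) := by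
  have hfactor : Tendsto (fun u : ℝ => 3 / (1 + 2 * u)) (𝓝[≠] 1) (𝓝 1) := by
    have : ContinuousAt (fun u : ℝ => 3 / (1 + 2 * u)) 1 := by fun_prop (disch := norm_num)
    convert tendsto_nhdsWithin_of_tendsto_nhds this.tendsto using 2
    norm_num
  have := tendsto_sq_div_sub_one_sub_log.mul hfactor
  rw [mul_one] at this
  refine this.congr' ?_
  filter_upwards [eventually_pos_ne_one] with u ⟨hu0, hu1⟩
  have := (sub_one_sub_log_pos hu0 hu1).ne'
  field_simp

theorem stmt_1 :
    (∀ u : ℝ, 0 < u → u ≠ 1 →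
      3 * (u - 1) ^ 2 / ((u - 1 - Real.log u) * (1 + 2 * u)) ≤ 2) ∧
    Filter.Tendsto (fun u : ℝ => 3 * (u - 1) ^ 2 / ((u - 1 - Real.log u) * (1 + 2 * u)))
      (nhdsWithin 1 {(1 : ℝ)}ᶜ) (nhds 2) ∧
    IsLUB ((fun u : ℝ => 3 * (u - 1) ^ 2 / ((u - 1 - Real.log u) * (1 + 2 * u))) ''
      {u : ℝ | 0 < u ∧ u ≠ 1}) 2 := by
  refine ⟨fun u hu hne => sq_div_sub_one_sub_log_mul_le_two hu hne,
    tendsto_sq_div_sub_one_sub_log_mul, isLUB_of_mem_closure ?_ ?_⟩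
  · rintro _ ⟨u, ⟨hu, hne⟩, rfl⟩
    exact sq_div_sub_one_sub_log_mul_le_two hu hne
  · exact mem_closure_of_tendsto tendsto_sq_div_sub_one_sub_log_mul
      (eventually_pos_ne_one.mono fun u hu => mem_image_of_mem _ hu)
end

section
/- For all u > 0, u - 1 - log u ≥ (1/2)·(u-1)²/(1 + (2/3)(u-1)) + (1/36)·(u-1)⁴/(1 + (28/45)(u-1))³. -/
/-!
Let `G(u)` be the left-hand side minus the right-hand side. Then `G(1) = 0` and
`G'(u) = (u-1)⁵ Q(u-1) / (9u (3 + 2(u-1))² (45 + 28(u-1))⁴)` with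
`Q(t) = 2980404 t² + 8953740 t + 6725025`, a quadratic of negative discriminant. So `G'` has the
sign of `u - 1` on `(0, ∞)`, and `G` attains its minimum `0` at `u = 1`.
-/

open Set

theorem isMinOn_of_sub_mul_hasDerivAt_nonneg {f f' : ℝ → ℝ} {s : Set ℝ} (hs : s.OrdConnected)
    {a : ℝ} (ha : a ∈ s) (hf : ∀ y ∈ s, HasDerivAt f (f' y) y)
    (hsign : ∀ y ∈ s, 0 ≤ (y - a) * f' y) : IsMinOn f s a := by
  have hcont {b c : ℝ} (hb : b ∈ s) (hc : c ∈ s) : ContinuousOn f (Icc b c) :=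
    fun y hy => (hf y (hs.out hb hc hy)).continuousAt.continuousWithinAt
  have hderiv {b c : ℝ} (hb : b ∈ s) (hc : c ∈ s) : ∀ y ∈ Ioo b c, HasDerivAt f (f' y) y :=
    fun y hy => hf y (hs.out hb hc (Ioo_subset_Icc_self hy))
  refine isMinOn_iff.2 fun x hx => ?_
  rcases lt_trichotomy a x with hax | rfl | hxa
  · obtain ⟨c, hc, hslope⟩ := exists_hasDerivAt_eq_slope f f' hax (hcont ha hx) (hderiv ha hx)
    have hc' : 0 ≤ f' c := nonneg_of_mul_nonneg_right
      (hsign c (hs.out ha hx (Ioo_subset_Icc_self hc))) (by linarith [hc.1])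
    have hmvt : f x - f a = f' c * (x - a) := by
      rw [hslope, div_mul_cancel₀ _ (sub_ne_zero.2 hax.ne')]
    linarith [mul_nonneg hc' (sub_nonneg.2 hax.le)]
  · exact le_rfl
  · obtain ⟨c, hc, hslope⟩ := exists_hasDerivAt_eq_slope f f' hxa (hcont hx ha) (hderiv hx ha)
    have hc' : f' c ≤ 0 := nonpos_of_mul_nonneg_right
      (hsign c (hs.out hx ha (Ioo_subset_Icc_self hc))) (by linarith [hc.2])
    have hmvt : f a - f x = f' c * (a - x) := by
      rw [hslope, div_mul_cancel₀ _ (sub_ne_zero.2 hxa.ne')]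
    linarith [mul_nonpos_of_nonpos_of_nonneg hc' (sub_nonneg.2 hxa.le)]

noncomputable def pinskerGap (u : ℝ) : ℝ :=
  u - 1 - Real.log u -
    ((1 / 2) * (u - 1) ^ 2 / (1 + (2 / 3) * (u - 1)) +
      (1 / 36) * (u - 1) ^ 4 / (1 + (28 / 45) * (u - 1)) ^ 3)

theorem pinskerGap_one : pinskerGap 1 = 0 := by
  simp [pinskerGap]

theorem hasDerivAt_pinskerGap {u : ℝ} (hu : 0 < u) :
    HasDerivAt pinskerGap
      ((u - 1) ^ 5 * (2980404 * (u - 1) ^ 2 + 8953740 * (u - 1) + 6725025) /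
        (9 * u * (3 + 2 * (u - 1)) ^ 2 * (45 + 28 * (u - 1)) ^ 4)) u := by
  have h₁ : 1 + (2 / 3) * (u - 1) ≠ 0 := by linarith
  have h₂ : 1 + (28 / 45) * (u - 1) ≠ 0 := by linarith
  have hsub : HasDerivAt (fun x : ℝ => x - 1) 1 u := (hasDerivAt_id u).sub_const 1
  have hquad := ((hsub.pow 2).const_mul (1 / 2 : ℝ)).div
    ((hsub.const_mul (2 / 3 : ℝ)).const_add 1) h₁
  have hquart := ((hsub.pow 4).const_mul (1 / 36 : ℝ)).div
    (((hsub.const_mul (28 / 45 : ℝ)).const_add 1).pow 3) (pow_ne_zero 3 h₂)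
  refine ((hsub.sub (Real.hasDerivAt_log hu.ne')).sub (hquad.add hquart)).congr_deriv ?_
  -- `field_simp` recognises the denominators only in this normal form
  have h₁' : 3 + (u - 1) * 2 ≠ 0 := by linarith
  have h₂' : 45 + (u - 1) * 28 ≠ 0 := by linarith
  simp only [Pi.pow_apply]
  field_simp
  ring

theorem sub_one_mul_deriv_pinskerGap_nonneg {u : ℝ} (hu : 0 < u) :
    0 ≤ (u - 1) * deriv pinskerGap u := by
  have hQ : 0 < 2980404 * (u - 1) ^ 2 + 8953740 * (u - 1) + 6725025 := by
    nlinarith [sq_nonneg (5960808 * (u - 1) + 8953740)]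
  have h₁ : 0 < 3 + 2 * (u - 1) := by linarith
  have h₂ : 0 < 45 + 28 * (u - 1) := by linarith
  rw [(hasDerivAt_pinskerGap hu).deriv, ← mul_div_assoc, ← mul_assoc, ← pow_succ']
  norm_num only
  positivity

theorem stmt_2 : ∀ u : ℝ, 0 < u →
    u - 1 - Real.log u ≥
      (1 / 2) * (u - 1) ^ 2 / (1 + (2 / 3) * (u - 1)) +
      (1 / 36) * (u - 1) ^ 4 / (1 + (28 / 45) * (u - 1)) ^ 3 := by
  intro u hu
  have hmin : IsMinOn pinskerGap (Ioi 0) 1 :=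
    isMinOn_of_sub_mul_hasDerivAt_nonneg ordConnected_Ioi (mem_Ioi.2 one_pos)
      (fun y hy => (hasDerivAt_pinskerGap hy).differentiableAt.hasDerivAt)
      (fun y hy => sub_one_mul_deriv_pinskerGap_nonneg hy)
  have h := isMinOn_iff.1 hmin u hu
  rw [pinskerGap_one, pinskerGap] at h
  linarith
end

section
/- Let P, Q be probability measures with densities p, q with respect to μ, h²(P,Q) = 1 - ∫√(pq) dμ the (halved) squared Hellinger distance, and V(P,Q) = ∫|q-p| dμ. Then 4h²(P,Q)(2 - h²(P,Q)) ≥ V(P,Q)². -/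
/-!
Cauchy–Schwarz applied to `|√p - √q|` and `√p + √q`, whose product is `|p - q|`: the squared
`L²` norms of the two factors are `∫ p + ∫ q ∓ 2 ∫ √(p q)`, i.e. `2h²` and `2(2 - h²)` for
probability densities.
-/

open MeasureTheory

namespace Real

lemma sq_sqrt_sub_sqrt {a b : ℝ} (ha : 0 ≤ a) (hb : 0 ≤ b) :
    (√a - √b) ^ 2 = a + b - 2 * √(a * b) := by
  rw [sqrt_mul ha, sub_sq, sq_sqrt ha, sq_sqrt hb]
  ring

lemma sq_sqrt_add_sqrt {a b : ℝ} (ha : 0 ≤ a) (hb : 0 ≤ b) :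
    (√a + √b) ^ 2 = a + b + 2 * √(a * b) := by
  rw [sqrt_mul ha, add_sq, sq_sqrt ha, sq_sqrt hb]
  ring

lemma abs_sqrt_sub_sqrt_mul_sqrt_add_sqrt {a b : ℝ} (ha : 0 ≤ a) (hb : 0 ≤ b) :
    |√a - √b| * (√a + √b) = |a - b| := by
  rw [← abs_of_nonneg (add_nonneg (sqrt_nonneg a) (sqrt_nonneg b)), ← abs_mul,
    mul_comm, ← sq_sub_sq, sq_sqrt ha, sq_sqrt hb]

end Real

namespace MeasureTheory

variable {α : Type*} [MeasurableSpace α] {μ : Measure α}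

lemma sq_integral_mul_le_integral_sq_mul_integral_sq {f g : α → ℝ} (hf0 : 0 ≤ᵐ[μ] f)
    (hg0 : 0 ≤ᵐ[μ] g) (hf : MemLp f 2 μ) (hg : MemLp g 2 μ) :
    (∫ x, f x * g x ∂μ) ^ 2 ≤ (∫ x, f x ^ 2 ∂μ) * ∫ x, g x ^ 2 ∂μ := by
  have holder := integral_mul_le_Lp_mul_Lq_of_nonneg Real.HolderConjugate.two_two hf0 hg0
    (by simpa using hf) (by simpa using hg)
  simp only [Real.rpow_two, ← Real.sqrt_eq_rpow] at holder
  have hfg0 : 0 ≤ ∫ x, f x * g x ∂μ :=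
    integral_nonneg_of_ae (by filter_upwards [hf0, hg0] with x hfx hgx using mul_nonneg hfx hgx)
  calc (∫ x, f x * g x ∂μ) ^ 2
      ≤ (√(∫ x, f x ^ 2 ∂μ) * √(∫ x, g x ^ 2 ∂μ)) ^ 2 := pow_le_pow_left₀ hfg0 holder 2
    _ = (∫ x, f x ^ 2 ∂μ) * ∫ x, g x ^ 2 ∂μ := by
      rw [mul_pow, Real.sq_sqrt (integral_nonneg fun x ↦ sq_nonneg _),
        Real.sq_sqrt (integral_nonneg fun x ↦ sq_nonneg _)]

lemma sq_integral_abs_sub_le {p q : α → ℝ} (hp0 : ∀ x, 0 ≤ p x) (hq0 : ∀ x, 0 ≤ q x)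
    (hp : Integrable p μ) (hq : Integrable q μ) (hpq : Integrable (fun x ↦ √(p x * q x)) μ) :
    (∫ x, |q x - p x| ∂μ) ^ 2 ≤
      ((∫ x, p x ∂μ) + (∫ x, q x ∂μ) - 2 * ∫ x, √(p x * q x) ∂μ) *
        ((∫ x, p x ∂μ) + (∫ x, q x ∂μ) + 2 * ∫ x, √(p x * q x) ∂μ) := by
  have hsp : AEStronglyMeasurable (fun x ↦ √(p x)) μ :=
    Real.continuous_sqrt.comp_aestronglyMeasurable hp.1
  have hsq : AEStronglyMeasurable (fun x ↦ √(q x)) μ :=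
    Real.continuous_sqrt.comp_aestronglyMeasurable hq.1
  have hdiff : ∀ x, |√(p x) - √(q x)| ^ 2 = p x + q x - 2 * √(p x * q x) := fun x ↦ by
    rw [sq_abs, Real.sq_sqrt_sub_sqrt (hp0 x) (hq0 x)]
  have hsum : ∀ x, (√(p x) + √(q x)) ^ 2 = p x + q x + 2 * √(p x * q x) := fun x ↦
    Real.sq_sqrt_add_sqrt (hp0 x) (hq0 x)
  have hadd : Integrable (fun x ↦ p x + q x) μ := hp.add hq
  have hf : MemLp (fun x ↦ |√(p x) - √(q x)|) 2 μ :=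
    (memLp_two_iff_integrable_sq (hsp.sub hsq).norm).2 <|
      (hadd.sub (hpq.const_mul 2)).congr (.of_forall fun x ↦ (hdiff x).symm)
  have hg : MemLp (fun x ↦ √(p x) + √(q x)) 2 μ :=
    (memLp_two_iff_integrable_sq (hsp.add hsq)).2 <|
      (hadd.add (hpq.const_mul 2)).congr (.of_forall fun x ↦ (hsum x).symm)
  have cs := sq_integral_mul_le_integral_sq_mul_integral_sq
    (.of_forall fun x ↦ abs_nonneg (√(p x) - √(q x)))
    (.of_forall fun x ↦ add_nonneg (Real.sqrt_nonneg (p x)) (Real.sqrt_nonneg (q x))) hf hg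
  simp only [Real.abs_sqrt_sub_sqrt_mul_sqrt_add_sqrt (hp0 _) (hq0 _), hdiff, hsum] at cs
  rwa [integral_sub hadd (hpq.const_mul 2), integral_add hadd (hpq.const_mul 2),
    integral_add hp hq, integral_const_mul,
    integral_congr_ae (.of_forall fun x ↦ abs_sub_comm (p x) (q x))] at cs

end MeasureTheory

theorem stmt_13_general {Ω : Type*} [MeasurableSpace Ω] (μ : Measure Ω)
    (p q : Ω → ℝ)
    (hp0 : ∀ x, 0 ≤ p x) (hq0 : ∀ x, 0 ≤ q x)
    (hp1 : ∫ x, p x ∂μ = 1) (hq1 : ∫ x, q x ∂μ = 1)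
    (hHint : Integrable (fun x => Real.sqrt (p x * q x)) μ) :
    4 * (1 - ∫ x, Real.sqrt (p x * q x) ∂μ) * (2 - (1 - ∫ x, Real.sqrt (p x * q x) ∂μ)) ≥
      (∫ x, |q x - p x| ∂μ) ^ 2 := by
  have hp : Integrable p μ := .of_integral_ne_zero (by rw [hp1]; exact one_ne_zero)
  have hq : Integrable q μ := .of_integral_ne_zero (by rw [hq1]; exact one_ne_zero)
  have h := sq_integral_abs_sub_le hp0 hq0 hp hq hHint
  rw [hp1, hq1] at h
  linarith

theorem stmt_13 {Ω : Type*} [MeasurableSpace Ω] (μ : Measure Ω)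
    (p q : Ω → ℝ) (hpm : Measurable p) (hqm : Measurable q)
    (hp0 : ∀ x, 0 ≤ p x) (hq0 : ∀ x, 0 ≤ q x)
    (hp1 : ∫ x, p x ∂μ = 1) (hq1 : ∫ x, q x ∂μ = 1)
    (hVint : Integrable (fun x => |q x - p x|) μ)
    (hHint : Integrable (fun x => Real.sqrt (p x * q x)) μ) :
    4 * (1 - ∫ x, Real.sqrt (p x * q x) ∂μ) * (2 - (1 - ∫ x, Real.sqrt (p x * q x) ∂μ)) ≥
      (∫ x, |q x - p x| ∂μ) ^ 2 :=
  stmt_13_general μ p q hp0 hq0 hp1 hq1 hHint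
end

section
/- For all u > 0: (u-1)·log u ≥ (u-1)²/(1 + (1/2)(u-1)) + (1/12)·(u-1)⁴/(1 + (1/2)(u-1))³. Consequently, the Jeffrey divergence J(P,Q) = ∫(q-p)log(q/p) dμ satisfies J ≥ V² + (1/12)V⁴. -/
open MeasureTheory

/-!
With `t = (u - 1) / (u + 1)` one has `log u = 2 artanh t = ∑ 2 t ^ (2k+1) / (2k+1)`; after
multiplying by `t` every term is nonnegative, so the first two terms already bound
`t log u` from below, which is the first inequality. Applied to `u = q / p` it gives pointwise
`(q - p) log (q / p) ≥ d + d² / (12 m)` with `m = (p + q) / 2` and `d = (q - p)² / m`. As `∫ m = 1`,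
Cauchy–Schwarz with weight `m` gives `∫ d ≥ V²` and `∫ d² / m ≥ (∫ d)² ≥ V⁴`.
-/

theorem two_mul_sq_add_le_mul_log_sub_log {t : ℝ} (ht : |t| < 1) :
    2 * t ^ 2 + 2 / 3 * t ^ 4 ≤ t * (Real.log (1 + t) - Real.log (1 - t)) := by
  have hsum := (Real.hasSum_log_sub_log_of_abs_lt_one ht).mul_left t
  have hterm (k : ℕ) : t * (2 * (1 / (2 * k + 1)) * t ^ (2 * k + 1)) =
      2 / (2 * k + 1) * (t ^ (k + 1)) ^ 2 := by ring
  have hpartial := sum_le_hasSum (Finset.range 2) (fun k _ => by rw [hterm]; positivity) hsum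
  norm_num [Finset.sum_range_succ] at hpartial
  linarith

theorem sub_one_sq_div_add_le_sub_one_mul_log {u : ℝ} (hu : 0 < u) :
    (u - 1) ^ 2 / (1 + (1 / 2) * (u - 1)) + (1 / 12) * (u - 1) ^ 4 / (1 + (1 / 2) * (u - 1)) ^ 3
      ≤ (u - 1) * Real.log u := by
  set t := (u - 1) / (u + 1) with ht_def
  have ht : |t| < 1 := by
    rw [abs_lt, ht_def, lt_div_iff₀ (by linarith), div_lt_one (by linarith)]
    constructor <;> linarith
  have hlog : Real.log (1 + t) - Real.log (1 - t) = Real.log u := by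
    obtain ⟨ht₁, ht₂⟩ := abs_lt.1 ht
    rw [← Real.log_div (by linarith) (by linarith)]
    congr 1
    rw [ht_def]
    field_simp
    ring
  have key := two_mul_sq_add_le_mul_log_sub_log ht
  rw [hlog] at key
  have hm : 1 + (1 / 2) * (u - 1) = (u + 1) / 2 := by ring
  calc _ = (u + 1) * (2 * t ^ 2 + 2 / 3 * t ^ 4) := by
        rw [hm, ht_def]; field_simp; ring
    _ ≤ (u + 1) * (t * Real.log u) := by gcongr
    _ = (u - 1) * Real.log u := by rw [ht_def]; field_simp

theorem sq_div_add_le_sub_mul_log_div {p q : ℝ} (hp : 0 < p) (hq : 0 < q) :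
    (q - p) ^ 2 / ((p + q) / 2) + 1 / 12 * ((q - p) ^ 4 / ((p + q) / 2) ^ 3)
      ≤ (q - p) * Real.log (q / p) := by
  have hm : 1 + 1 / 2 * (q / p - 1) = (p + q) / 2 / p := by field_simp; ring
  have hpq : 0 < p + q := by positivity
  calc _ = p * ((q / p - 1) ^ 2 / (1 + 1 / 2 * (q / p - 1)) +
        1 / 12 * (q / p - 1) ^ 4 / (1 + 1 / 2 * (q / p - 1)) ^ 3) := by
        rw [hm]; field_simp
    _ ≤ p * ((q / p - 1) * Real.log (q / p)) :=
        mul_le_mul_of_nonneg_left (sub_one_sq_div_add_le_sub_one_mul_log (div_pos hq hp)) hp.le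
    _ = (q - p) * Real.log (q / p) := by
        rw [← mul_assoc, mul_sub, mul_div_cancel₀ _ hp.ne', mul_one]

theorem sq_integral_le_integral_sq_div {Ω : Type*} [MeasurableSpace Ω] {μ : Measure Ω}
    {f w : Ω → ℝ} (hw : ∀ᵐ x ∂μ, 0 < w x) (hw_int : Integrable w μ) (hw_one : ∫ x, w x ∂μ = 1)
    (hf : Integrable f μ) (hfw : Integrable (fun x => f x ^ 2 / w x) μ) :
    (∫ x, f x ∂μ) ^ 2 ≤ ∫ x, f x ^ 2 / w x ∂μ := by
  set c := ∫ x, f x ∂μ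
  -- expand `0 ≤ ∫ (f - c w)² / w`
  have hsq : 0 ≤ ∫ x, (f x ^ 2 / w x - 2 * c * f x + c ^ 2 * w x) ∂μ := by
    refine integral_nonneg_of_ae ?_
    filter_upwards [hw] with x hx
    have : f x ^ 2 / w x - 2 * c * f x + c ^ 2 * w x = (f x - c * w x) ^ 2 / w x := by
      field_simp; ring
    rw [Pi.zero_apply, this]
    positivity
  rw [integral_add, integral_sub, integral_const_mul, integral_const_mul, hw_one] at hsq
  · linarith
  exacts [hfw, hf.const_mul _, hfw.sub (hf.const_mul _), hw_int.const_mul _]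

theorem sq_add_pow_four_integral_abs_le {Ω : Type*} [MeasurableSpace Ω] {μ : Measure Ω}
    {f w : Ω → ℝ} (hw : ∀ᵐ x ∂μ, 0 < w x) (hw_int : Integrable w μ) (hw_one : ∫ x, w x ∂μ = 1)
    (hf : Integrable (fun x => |f x|) μ) (hf₂ : Integrable (fun x => f x ^ 2 / w x) μ)
    (hf₄ : Integrable (fun x => (f x ^ 2 / w x) ^ 2 / w x) μ) :
    (∫ x, |f x| ∂μ) ^ 2 + 1 / 12 * (∫ x, |f x| ∂μ) ^ 4 ≤
      ∫ x, f x ^ 2 / w x ∂μ + 1 / 12 * ∫ x, (f x ^ 2 / w x) ^ 2 / w x ∂μ := by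
  have h₂ : (∫ x, |f x| ∂μ) ^ 2 ≤ ∫ x, f x ^ 2 / w x ∂μ := by
    simpa only [sq_abs] using sq_integral_le_integral_sq_div hw hw_int hw_one hf
      (by simpa only [sq_abs] using hf₂)
  have h₄ := sq_integral_le_integral_sq_div hw hw_int hw_one hf₂ hf₄
  nlinarith [sq_nonneg (∫ x, |f x| ∂μ)]

theorem sq_integral_abs_sub_add_le_integral_sub_mul_log_div {Ω : Type*} [MeasurableSpace Ω]
    {μ : Measure Ω} {p q : Ω → ℝ} (hpm : Measurable p) (hqm : Measurable q)
    (hp : ∀ x, 0 < p x) (hq : ∀ x, 0 < q x) (hp_one : ∫ x, p x ∂μ = 1) (hq_one : ∫ x, q x ∂μ = 1)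
    (hV : Integrable (fun x => |q x - p x|) μ)
    (hJ : Integrable (fun x => (q x - p x) * Real.log (q x / p x)) μ) :
    (∫ x, |q x - p x| ∂μ) ^ 2 + 1 / 12 * (∫ x, |q x - p x| ∂μ) ^ 4 ≤
      ∫ x, (q x - p x) * Real.log (q x / p x) ∂μ := by
  have hp_int : Integrable p μ := .of_integral_ne_zero (by simp [hp_one])
  have hq_int : Integrable q μ := .of_integral_ne_zero (by simp [hq_one])
  set m : Ω → ℝ := fun x => (p x + q x) / 2
  have hm (x : Ω) : 0 < m x := by have := hp x; have := hq x; positivity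
  have hm_one : ∫ x, m x ∂μ = 1 := by
    rw [integral_div, integral_add hp_int hq_int, hp_one, hq_one]; norm_num
  set d : Ω → ℝ := fun x => (q x - p x) ^ 2 / m x
  have hd (x : Ω) : 0 ≤ d x := by have := hm x; positivity
  have hd' (x : Ω) : 0 ≤ d x ^ 2 / m x := by have := hm x; positivity
  have hpointwise (x : Ω) :
      d x + 1 / 12 * (d x ^ 2 / m x) ≤ (q x - p x) * Real.log (q x / p x) := by
    convert sq_div_add_le_sub_mul_log_div (hp x) (hq x) using 3
    have := hm x
    simp only [d, m]
    field_simp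
  have hd_meas : Measurable d := ((hqm.sub hpm).pow_const 2).div ((hpm.add hqm).div_const 2)
  have hd_int : Integrable d μ := hJ.mono' hd_meas.aestronglyMeasurable <| ae_of_all _ fun x => by
    rw [Real.norm_eq_abs, abs_of_nonneg (hd x)]; linarith [hpointwise x, hd' x]
  have hd'_int : Integrable (fun x => d x ^ 2 / m x) μ :=
    (hJ.const_mul 12).mono'
      ((hd_meas.pow_const 2).div ((hpm.add hqm).div_const 2)).aestronglyMeasurable <|
      ae_of_all _ fun x => by
        rw [Real.norm_eq_abs, abs_of_nonneg (hd' x)]; linarith [hpointwise x, hd x]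
  calc _ ≤ ∫ x, d x ∂μ + 1 / 12 * ∫ x, d x ^ 2 / m x ∂μ :=
        sq_add_pow_four_integral_abs_le (ae_of_all _ hm) ((hp_int.add hq_int).div_const 2) hm_one
          hV hd_int hd'_int
    _ ≤ _ := by
      rw [← integral_const_mul, ← integral_add hd_int (hd'_int.const_mul _)]
      exact integral_mono (hd_int.add (hd'_int.const_mul _)) hJ hpointwise

theorem stmt_16 :
    (∀ u : ℝ, 0 < u →
      (u - 1) * Real.log u ≥
        (u - 1) ^ 2 / (1 + (1 / 2) * (u - 1)) +
        (1 / 12) * (u - 1) ^ 4 / (1 + (1 / 2) * (u - 1)) ^ 3) ∧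
    (∀ (Ω : Type) (_ : MeasurableSpace Ω) (μ : Measure Ω) (p q : Ω → ℝ),
      Measurable p → Measurable q →
      (∀ x, 0 < p x) → (∀ x, 0 < q x) →
      (∫ x, p x ∂μ) = 1 → (∫ x, q x ∂μ) = 1 →
      Integrable (fun x => |q x - p x|) μ →
      Integrable (fun x => (q x - p x) * Real.log (q x / p x)) μ →
      (∫ x, (q x - p x) * Real.log (q x / p x) ∂μ) ≥
        (∫ x, |q x - p x| ∂μ) ^ 2 + (1 / 12) * (∫ x, |q x - p x| ∂μ) ^ 4) :=
  ⟨fun _ hu => sub_one_sq_div_add_le_sub_one_mul_log hu,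
    fun _ _ _ _ _ hpm hqm hp hq hp_one hq_one hV hJ =>
      sq_integral_abs_sub_add_le_integral_sub_mul_log_div hpm hqm hp hq hp_one hq_one hV hJ⟩
end
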